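/- Let r, t be positive integers with 2 ≤ t ≤ r−1 and n = 3r−t. If t ≤ (r+5)/5, then ρ_2(K(n,r)) = 3. -/
import Mathlib


open Finset

/-- The vertex set of the Kneser graph `K(n,r)`: the `r`-element subsets of `[n] = {1,…,n}`. -/
def KneserVerts (n r : ℕ) : Finset (Finset ℕ) := (Finset.Icc 1 n).powersetCard r

/-- Adjacency in a Kneser graph: distinct disjoint sets. -/
def KneserAdj (u v : Finset ℕ) : Prop := u ≠ v ∧ Disjoint u v

instance (u v : Finset ℕ) : Decidable (KneserAdj u v) := by
  unfold KneserAdj; infer_instance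

/-- `D` is a `k`-dominating set of `K(n,r)`: every vertex outside `D` has at least
`k` neighbours in `D`. -/
def IsKDomSet (n r k : ℕ) (D : Finset (Finset ℕ)) : Prop :=
  D ⊆ KneserVerts n r ∧
    ∀ v ∈ KneserVerts n r, v ∉ D → k ≤ (D.filter fun u => KneserAdj v u).card

/-- `D` is a `k`-tuple dominating set of `K(n,r)`: every vertex has at least `k`
vertices of `D` in its closed neighbourhood. -/
def IsKTupleDomSet (n r k : ℕ) (D : Finset (Finset ℕ)) : Prop :=
  D ⊆ KneserVerts n r ∧
    ∀ v ∈ KneserVerts n r, k ≤ (D.filter fun u => u = v ∨ KneserAdj v u).card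

/-- `D` is a `k`-tuple total dominating set of `K(n,r)`: every vertex has at least
`k` neighbours in `D`. -/
def IsKTupleTotalDomSet (n r k : ℕ) (D : Finset (Finset ℕ)) : Prop :=
  D ⊆ KneserVerts n r ∧
    ∀ v ∈ KneserVerts n r, k ≤ (D.filter fun u => KneserAdj v u).card

/-- The `k`-domination number `γ_k(K(n,r))`. -/
noncomputable def kdomNum (n r k : ℕ) : ℕ :=
  sInf {m | ∃ D, IsKDomSet n r k D ∧ D.card = m}

/-- The `k`-tuple domination number `γ_{×k}(K(n,r))`. -/
noncomputable def ktupleDomNum (n r k : ℕ) : ℕ :=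
  sInf {m | ∃ D, IsKTupleDomSet n r k D ∧ D.card = m}

/-- The `k`-tuple total domination number `γ_{×k,t}(K(n,r))`. -/
noncomputable def ktupleTotalDomNum (n r k : ℕ) : ℕ :=
  sInf {m | ∃ D, IsKTupleTotalDomSet n r k D ∧ D.card = m}

/-- `S` is a 2-packing of `K(n,r)`: any two distinct members are neither adjacent
nor have a common neighbour (i.e. are at distance at least 3). -/
def IsTwoPacking (n r : ℕ) (S : Finset (Finset ℕ)) : Prop :=
  S ⊆ KneserVerts n r ∧
    ∀ u ∈ S, ∀ v ∈ S, u ≠ v →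
      ¬ KneserAdj u v ∧ ∀ w ∈ KneserVerts n r, ¬ (KneserAdj u w ∧ KneserAdj w v)

/-- The 2-packing number `ρ₂(K(n,r))`. -/
noncomputable def twoPackingNum (n r : ℕ) : ℕ :=
  sSup {m | ∃ S, IsTwoPacking n r S ∧ S.card = m}

/-- A clique in a Kneser graph: a family of pairwise disjoint sets. -/
def IsKneserClique (D : Finset (Finset ℕ)) : Prop :=
  ∀ u ∈ D, ∀ v ∈ D, u ≠ v → Disjoint u v


lemma mem_KV {n r : ℕ} {u : Finset ℕ} :
    u ∈ KneserVerts n r ↔ u ⊆ Finset.Icc 1 n ∧ u.card = r :=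
  Finset.mem_powersetCard

/-- In a 2-packing, distinct members intersect, and their union is large. -/
lemma packing_pair {n r : ℕ} (hr : 1 ≤ r) {S : Finset (Finset ℕ)}
    (hS : IsTwoPacking n r S) {u v : Finset ℕ} (hu : u ∈ S) (hv : v ∈ S)
    (hne : u ≠ v) : ¬ Disjoint u v ∧ n < (u ∪ v).card + r := by
  obtain ⟨hsub, hpair⟩ := hS
  obtain ⟨hadj, hcn⟩ := hpair u hu v hv hne
  have hucard : u.card = r := (mem_KV.1 (hsub hu)).2
  refine ⟨fun hd => hadj ⟨hne, hd⟩, ?_⟩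
  by_contra hle
  push_neg at hle
  have hun : u ∪ v ⊆ Finset.Icc 1 n :=
    Finset.union_subset (mem_KV.1 (hsub hu)).1 (mem_KV.1 (hsub hv)).1
  have hcard : ((Finset.Icc 1 n) \ (u ∪ v)).card = n - (u ∪ v).card := by
    rw [Finset.card_sdiff_of_subset hun, Nat.card_Icc]; omega
  have hrle : r ≤ ((Finset.Icc 1 n) \ (u ∪ v)).card := by omega
  obtain ⟨w, hwsub, hwcard⟩ := Finset.exists_subset_card_eq hrle
  have hwK : w ∈ KneserVerts n r :=
    mem_KV.2 ⟨hwsub.trans Finset.sdiff_subset, hwcard⟩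
  have hdw : Disjoint w (u ∪ v) :=
    Finset.disjoint_of_subset_left hwsub Finset.sdiff_disjoint
  rw [Finset.disjoint_union_right] at hdw
  have hneu : u ≠ w := by
    intro h
    have : Disjoint u u := h ▸ hdw.1.symm
    rw [disjoint_self] at this
    simp [this] at hucard
    omega
  have hnev : w ≠ v := by
    intro h
    have hvcard : v.card = r := (mem_KV.1 (hsub hv)).2
    have : Disjoint v v := h ▸ hdw.2
    rw [disjoint_self] at this
    simp [this] at hvcard
    omega
  exact hcn w hwK ⟨⟨hneu, hdw.1.symm⟩, ⟨hnev, hdw.2⟩⟩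

/-- Converse: pairwise intersecting with large unions gives a 2-packing. -/
lemma isPacking_of {n r : ℕ} (hr : 1 ≤ r) {S : Finset (Finset ℕ)}
    (hS : S ⊆ KneserVerts n r)
    (h : ∀ u ∈ S, ∀ v ∈ S, u ≠ v → ¬ Disjoint u v ∧ n < (u ∪ v).card + r) :
    IsTwoPacking n r S := by
  refine ⟨hS, fun u hu v hv hne => ?_⟩
  obtain ⟨hnd, hlt⟩ := h u hu v hv hne
  refine ⟨fun h' => hnd h'.2, fun w hw hadj => ?_⟩
  obtain ⟨⟨_, hd1⟩, ⟨_, hd2⟩⟩ := hadj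
  have hun : u ∪ v ⊆ Finset.Icc 1 n :=
    Finset.union_subset (mem_KV.1 (hS hu)).1 (mem_KV.1 (hS hv)).1
  have hwsub : w ⊆ Finset.Icc 1 n \ (u ∪ v) := by
    refine Finset.subset_sdiff.mpr ⟨(mem_KV.1 hw).1, ?_⟩
    rw [Finset.disjoint_union_right]
    exact ⟨hd1.symm, hd2⟩
  have hle := Finset.card_le_card hwsub
  rw [Finset.card_sdiff_of_subset hun, Nat.card_Icc, (mem_KV.1 hw).2] at hle
  omega

/-- Any 2-packing of `K(3r-t, r)` has at most 3 members. -/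
lemma packing_card_le (r t : ℕ) (hr : 1 ≤ r) (ht2 : 2 ≤ t) (htr : t ≤ r - 1)
    (ht : 5 * t ≤ r + 5) {S : Finset (Finset ℕ)}
    (hS : IsTwoPacking (3 * r - t) r S) : S.card ≤ 3 := by
  by_contra hc
  push_neg at hc
  obtain ⟨T, hTS, hT4⟩ := Finset.exists_subset_card_eq (show 4 ≤ S.card by omega)
  obtain ⟨a, haT⟩ := Finset.card_pos.mp (by omega : 0 < T.card)
  have hT'3 : (T.erase a).card = 3 := by
    rw [Finset.card_erase_of_mem haT]; omega
  obtain ⟨b, c, d, hbc, hbd, hcd, hTe⟩ := Finset.card_eq_three.mp hT'3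
  have hbT : b ∈ T.erase a := by rw [hTe]; simp
  have hcT : c ∈ T.erase a := by rw [hTe]; simp
  have hdT : d ∈ T.erase a := by rw [hTe]; simp
  have hab : a ≠ b := fun h => (Finset.mem_erase.1 hbT).1 h.symm
  have hac : a ≠ c := fun h => (Finset.mem_erase.1 hcT).1 h.symm
  have had : a ≠ d := fun h => (Finset.mem_erase.1 hdT).1 h.symm
  have haS : a ∈ S := hTS haT
  have hbS : b ∈ S := hTS (Finset.mem_of_mem_erase hbT)
  have hcS : c ∈ S := hTS (Finset.mem_of_mem_erase hcT)
  have hdS : d ∈ S := hTS (Finset.mem_of_mem_erase hdT)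
  have hca : a.card = r := (mem_KV.1 (hS.1 haS)).2
  have hcb : b.card = r := (mem_KV.1 (hS.1 hbS)).2
  have hcc : c.card = r := (mem_KV.1 (hS.1 hcS)).2
  have hcdd : d.card = r := (mem_KV.1 (hS.1 hdS)).2
  -- pairwise facts
  have key : ∀ u ∈ S, ∀ v ∈ S, u ≠ v →
      1 ≤ (u ∩ v).card ∧ (u ∩ v).card < t := by
    intro u hu v hv hne
    obtain ⟨hnd, hlt⟩ := packing_pair hr hS hu hv hne
    have h1 : (u ∩ v).Nonempty := Finset.not_disjoint_iff_nonempty_inter.mp hnd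
    have h2 := Finset.card_union_add_card_inter u v
    have hcu : u.card = r := (mem_KV.1 (hS.1 hu)).2
    have hcv : v.card = r := (mem_KV.1 (hS.1 hv)).2
    have h1' := Finset.card_pos.mpr h1
    constructor
    · omega
    · omega
  obtain ⟨iab1, iab2⟩ := key a haS b hbS hab
  obtain ⟨iac1, iac2⟩ := key a haS c hcS hac
  obtain ⟨iad1, iad2⟩ := key a haS d hdS had
  obtain ⟨ibc1, ibc2⟩ := key b hbS c hcS hbc
  obtain ⟨ibd1, ibd2⟩ := key b hbS d hdS hbd
  obtain ⟨icd1, icd2⟩ := key c hcS d hdS hcd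
  -- Bonferroni
  have h1 := Finset.card_union_add_card_inter a b
  have h2 := Finset.card_union_add_card_inter (a ∪ b) c
  have h3 := Finset.card_union_add_card_inter (a ∪ b ∪ c) d
  have e2 : (a ∪ b) ∩ c = (a ∩ c) ∪ (b ∩ c) := Finset.union_inter_distrib_right ..
  have e3 : (a ∪ b ∪ c) ∩ d = ((a ∩ d) ∪ (b ∩ d)) ∪ (c ∩ d) := by
    rw [Finset.union_inter_distrib_right, Finset.union_inter_distrib_right]
  have le2 : ((a ∪ b) ∩ c).card ≤ (a ∩ c).card + (b ∩ c).card := by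
    rw [e2]; exact Finset.card_union_le _ _
  have le3 : ((a ∪ b ∪ c) ∩ d).card ≤ (a ∩ d).card + (b ∩ d).card + (c ∩ d).card := by
    rw [e3]
    calc ((a ∩ d) ∪ (b ∩ d) ∪ (c ∩ d)).card
        ≤ ((a ∩ d) ∪ (b ∩ d)).card + (c ∩ d).card := Finset.card_union_le _ _
      _ ≤ (a ∩ d).card + (b ∩ d).card + (c ∩ d).card := by
          have := Finset.card_union_le (a ∩ d) (b ∩ d); omega
  have hbig : (a ∪ b ∪ c ∪ d).card ≤ 3 * r - t := by
    have hsub : a ∪ b ∪ c ∪ d ⊆ Finset.Icc 1 (3 * r - t) := by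
      refine Finset.union_subset (Finset.union_subset (Finset.union_subset ?_ ?_) ?_) ?_
      · exact (mem_KV.1 (hS.1 haS)).1
      · exact (mem_KV.1 (hS.1 hbS)).1
      · exact (mem_KV.1 (hS.1 hcS)).1
      · exact (mem_KV.1 (hS.1 hdS)).1
    have := Finset.card_le_card hsub
    rwa [Nat.card_Icc, Nat.add_sub_cancel] at this
  omega

lemma packing_three (r t : ℕ) (hr : 1 ≤ r) (ht2 : 2 ≤ t) (htr : t ≤ r - 1)
    (ht : 5 * t ≤ r + 5) :
    ∃ S : Finset (Finset ℕ), IsTwoPacking (3 * r - t) r S ∧ S.card = 3 := by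
  have htr' : t + 1 ≤ r := by omega
  set A : Finset ℕ := Finset.Icc 1 r with hA
  set B : Finset ℕ := Finset.Icc 1 (t - 1) ∪ Finset.Icc (r + 1) (2 * r - t + 1) with hB
  set C : Finset ℕ := Finset.Icc 1 (t - 1) ∪ Finset.Icc (2 * r - t + 2) (3 * r - 2 * t + 2) with hC
  have memA : ∀ x, x ∈ A ↔ 1 ≤ x ∧ x ≤ r := by
    intro x; simp [hA, Finset.mem_Icc]
  have memB : ∀ x, x ∈ B ↔ (1 ≤ x ∧ x ≤ t - 1) ∨ (r + 1 ≤ x ∧ x ≤ 2 * r - t + 1) := by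
    intro x; simp [hB, Finset.mem_Icc]
  have memC : ∀ x, x ∈ C ↔ (1 ≤ x ∧ x ≤ t - 1) ∨ (2 * r - t + 2 ≤ x ∧ x ≤ 3 * r - 2 * t + 2) := by
    intro x; simp [hC, Finset.mem_Icc]
  have cardA : A.card = r := by rw [hA, Nat.card_Icc]; omega
  have dB : Disjoint (Finset.Icc 1 (t - 1)) (Finset.Icc (r + 1) (2 * r - t + 1)) := by
    rw [Finset.disjoint_left]
    intro x hx hx'
    simp [Finset.mem_Icc] at hx hx'
    omega
  have dC : Disjoint (Finset.Icc 1 (t - 1)) (Finset.Icc (2 * r - t + 2) (3 * r - 2 * t + 2)) := by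
    rw [Finset.disjoint_left]
    intro x hx hx'
    simp [Finset.mem_Icc] at hx hx'
    omega
  have cardB : B.card = r := by
    rw [hB, Finset.card_union_of_disjoint dB, Nat.card_Icc, Nat.card_Icc]; omega
  have cardC : C.card = r := by
    rw [hC, Finset.card_union_of_disjoint dC, Nat.card_Icc, Nat.card_Icc]; omega
  have subA : A ⊆ Finset.Icc 1 (3 * r - t) := by
    intro x hx; rw [memA] at hx; rw [Finset.mem_Icc]; omega
  have subB : B ⊆ Finset.Icc 1 (3 * r - t) := by
    intro x hx; rw [memB] at hx; rw [Finset.mem_Icc]; omega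
  have subC : C ⊆ Finset.Icc 1 (3 * r - t) := by
    intro x hx; rw [memC] at hx; rw [Finset.mem_Icc]; omega
  have hAB : A ≠ B := by
    intro h
    have h1 : r ∈ A := (memA r).2 (by omega)
    rw [h, memB] at h1
    omega
  have hAC : A ≠ C := by
    intro h
    have h1 : r ∈ A := (memA r).2 (by omega)
    rw [h, memC] at h1
    omega
  have hBC : B ≠ C := by
    intro h
    have h1 : r + 1 ∈ B := (memB (r + 1)).2 (by omega)
    rw [h, memC] at h1
    omega
  -- union cardinalities
  have uAB : A ∪ B = Finset.Icc 1 (2 * r - t + 1) := by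
    ext x
    rw [Finset.mem_union, memA, memB, Finset.mem_Icc]
    omega
  have cAB : (A ∪ B).card = 2 * r - t + 1 := by
    rw [uAB, Nat.card_Icc]; omega
  have uAC : A ∪ C = Finset.Icc 1 r ∪ Finset.Icc (2 * r - t + 2) (3 * r - 2 * t + 2) := by
    ext x
    rw [Finset.mem_union, memA, memC, Finset.mem_union, Finset.mem_Icc, Finset.mem_Icc]
    omega
  have cAC : (A ∪ C).card = 2 * r - t + 1 := by
    rw [uAC, Finset.card_union_of_disjoint, Nat.card_Icc, Nat.card_Icc]
    · omega
    · rw [Finset.disjoint_left]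
      intro x hx hx'
      simp [Finset.mem_Icc] at hx hx'
      omega
  have uBC : B ∪ C = Finset.Icc 1 (t - 1) ∪ Finset.Icc (r + 1) (3 * r - 2 * t + 2) := by
    ext x
    rw [Finset.mem_union, memB, memC, Finset.mem_union, Finset.mem_Icc, Finset.mem_Icc]
    omega
  have cBC : (B ∪ C).card = 2 * r - t + 1 := by
    rw [uBC, Finset.card_union_of_disjoint, Nat.card_Icc, Nat.card_Icc]
    · omega
    · rw [Finset.disjoint_left]
      intro x hx hx'
      simp [Finset.mem_Icc] at hx hx'
      omega
  have ndAB : ¬ Disjoint A B := by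
    rw [Finset.not_disjoint_iff]
    exact ⟨1, (memA 1).2 (by omega), (memB 1).2 (by omega)⟩
  have ndAC : ¬ Disjoint A C := by
    rw [Finset.not_disjoint_iff]
    exact ⟨1, (memA 1).2 (by omega), (memC 1).2 (by omega)⟩
  have ndBC : ¬ Disjoint B C := by
    rw [Finset.not_disjoint_iff]
    exact ⟨1, (memB 1).2 (by omega), (memC 1).2 (by omega)⟩
  refine ⟨{A, B, C}, ?_, ?_⟩
  · apply isPacking_of hr
    · intro u hu
      simp only [Finset.mem_insert, Finset.mem_singleton] at hu
      rcases hu with rfl | rfl | rfl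
      · exact mem_KV.2 ⟨subA, cardA⟩
      · exact mem_KV.2 ⟨subB, cardB⟩
      · exact mem_KV.2 ⟨subC, cardC⟩
    · intro u hu v hv hne
      simp only [Finset.mem_insert, Finset.mem_singleton] at hu hv
      rcases hu with rfl | rfl | rfl <;> rcases hv with rfl | rfl | rfl <;>
        first
        | exact absurd rfl hne
        | (exact ⟨ndAB, by rw [cAB]; omega⟩)
        | (exact ⟨fun h => ndAB h.symm, by rw [Finset.union_comm, cAB]; omega⟩)
        | (exact ⟨ndAC, by rw [cAC]; omega⟩)
        | (exact ⟨fun h => ndAC h.symm, by rw [Finset.union_comm, cAC]; omega⟩)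
        | (exact ⟨ndBC, by rw [cBC]; omega⟩)
        | (exact ⟨fun h => ndBC h.symm, by rw [Finset.union_comm, cBC]; omega⟩)
  · rw [Finset.card_insert_of_notMem, Finset.card_insert_of_notMem, Finset.card_singleton]
    · simp [hBC]
    · simp [hAB, hAC]

theorem stmt_16 (r t : ℕ) (hr : 1 ≤ r) (ht2 : 2 ≤ t) (htr : t ≤ r - 1)
    (ht : 5 * t ≤ r + 5) :
    twoPackingNum (3 * r - t) r = 3 := by
  have hub : ∀ m ∈ {m | ∃ S, IsTwoPacking (3 * r - t) r S ∧ S.card = m}, m ≤ 3 := by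
    rintro m ⟨S, hS, rfl⟩
    exact packing_card_le r t hr ht2 htr ht hS
  obtain ⟨S, hS, hc⟩ := packing_three r t hr ht2 htr ht
  have h3 : 3 ∈ {m | ∃ S, IsTwoPacking (3 * r - t) r S ∧ S.card = m} := ⟨S, hS, hc⟩
  exact le_antisymm (csSup_le ⟨3, h3⟩ hub) (le_csSup ⟨3, hub⟩ h3)
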